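/- arXiv:2512.08460 — 5 statements merged into one kernel-verified Lean document; each statement's English description precedes it below -/
import Mathlib

section
/- Suppose that for each ρ ∈ (0,1], Ψ_ρ : Ω → ℂ is analytic on Ω and satisfies Ψ_ρ(z) = φ^{(ρ)}(z)/φ(z) for all z ∈ Ω ∖ (S + Λ), where φ^{(ρ)}(z) = ∑_{m∈Λ} 2^{−ρ|m|} ϕ(z − m). Then: (a) there exists C > 0 such that |Ψ_ρ(z)| ≤ C for every ρ ∈ (0,1] and every z ∈ Ω; and (b) for every M ≥ 1 and every ε > 0 there exists ρ₀ > 0 such that |Ψ_ρ(z) − 1| ≤ ε for every ρ ∈ (0, ρ₀) and every z ∈ Ω with |Re z| ≤ M and |Im z| ≤ M. -/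
/-!
Fix `z ∈ Ω ∖ (S + Λ)` and let `n = (⌊Re z⌋, ⌊Im z⌋)`. For `m ≠ n` the translate `z - m` lies
outside `Q`: either in a fixed compact set avoiding `Q`, hence the poles, or outside `cl Q`, where
`ϕ` decays like `|·|^{-b}`. So `|ϕ (z - m)| ≤ g (m - n)` for one summable `g`, independent of `z`,
and the single undominated term `ϕ (z - n)` is at most `|φ z| + ∑ g`. Writing
`φ^{(ρ)} - φ = ∑ (2^{-ρ|m|} - 1) ϕ (z - m)` with `|2^{-ρ|m|} - 1| ≤ min 1 (ρ|m|)` and using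
`|φ| ≥ c` bounds `|Ψ_ρ z - 1|` by `1 + 2 ∑ g / c`, giving (a), and, for `|z| < R`, by
`u₀ + (u₀ ∑ g + ∑_q min 1 (ρ (R + 2 + |q|)) g q) / c` with `u₀ = min 1 (ρ (R + 2))`, which tends
to `0` as `ρ → 0⁺` by dominated convergence, giving (b). Both bounds pass from `Ω ∖ (S + Λ)` to
`Ω` by continuity of `Ψ_ρ`, since the countable set `S + Λ` has dense complement.
-/

open Complex MeasureTheory Set Filter

noncomputable section

/-- The Gaussian integer lattice point associated to a pair of integers. -/
def latPt (p : ℤ × ℤ) : ℂ := (p.1 : ℂ) + (p.2 : ℂ) * Complex.I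

/-- The open unit square `Q = (0,1) × (0,1)` in `ℂ`. -/
def QSet : Set ℂ := {z : ℂ | z.re ∈ Set.Ioo (0:ℝ) 1 ∧ z.im ∈ Set.Ioo (0:ℝ) 1}

/-- The set `S + Λ` of all translates of points of `S` by lattice points. -/
def SLat (S : Finset ℂ) : Set ℂ := {z : ℂ | ∃ s ∈ S, ∃ p : ℤ × ℤ, z = s + latPt p}

open Topology

def fundCell : Set ℂ := {w : ℂ | w.re ∈ Ico (0:ℝ) 1 ∧ w.im ∈ Ico (0:ℝ) 1}

def latFloor (z : ℂ) : ℤ × ℤ := (⌊z.re⌋, ⌊z.im⌋)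

@[simp] lemma latPt_re (p : ℤ × ℤ) : (latPt p).re = p.1 := by simp [latPt]

@[simp] lemma latPt_im (p : ℤ × ℤ) : (latPt p).im = p.2 := by simp [latPt]

lemma latPt_sub (p q : ℤ × ℤ) : latPt (p - q) = latPt p - latPt q := by
  simp only [latPt, Prod.fst_sub, Prod.snd_sub, Int.cast_sub]; ring

lemma latPt_neg (p : ℤ × ℤ) : latPt (-p) = -latPt p := by
  simp only [latPt, Prod.fst_neg, Prod.snd_neg, Int.cast_neg]; ring

lemma sub_latPt_latFloor_mem_fundCell (z : ℂ) : z - latPt (latFloor z) ∈ fundCell := by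
  simp only [fundCell, latFloor, mem_ofPred_eq, sub_re, sub_im, latPt_re, latPt_im]
  rw [← Int.fract, ← Int.fract]
  exact ⟨⟨Int.fract_nonneg _, Int.fract_lt_one _⟩, ⟨Int.fract_nonneg _, Int.fract_lt_one _⟩⟩

lemma norm_lt_two_of_mem_fundCell {w : ℂ} (hw : w ∈ fundCell) : ‖w‖ < 2 := by
  have := norm_le_abs_re_add_abs_im w
  rw [abs_of_nonneg hw.1.1, abs_of_nonneg hw.2.1] at this
  linarith [hw.1.2, hw.2.2]

lemma norm_latPt_le_add_norm_latPt_sub_latFloor {z : ℂ} {R : ℝ} (hz : ‖z‖ < R) (m : ℤ × ℤ) :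
    ‖latPt m‖ ≤ R + 2 + ‖latPt (m - latFloor z)‖ := by
  have := norm_lt_two_of_mem_fundCell (sub_latPt_latFloor_mem_fundCell z)
  rw [latPt_sub]
  linarith [norm_le_norm_add_norm_sub z (latPt (latFloor z)),
    norm_le_norm_add_norm_sub' (latPt m) (latPt (latFloor z))]

lemma isOpen_QSet : IsOpen QSet :=
  (isOpen_Ioo.preimage continuous_re).inter (isOpen_Ioo.preimage continuous_im)

lemma closure_QSet_subset_closedBall : closure QSet ⊆ Metric.closedBall 0 2 := by
  refine closure_minimal (fun z hz => ?_) Metric.isClosed_closedBall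
  have := norm_le_abs_re_add_abs_im z
  rw [abs_of_pos hz.1.1, abs_of_pos hz.2.1] at this
  simp only [Metric.mem_closedBall, dist_zero_right]
  linarith [hz.1.2, hz.2.2]

lemma sub_latPt_notMem_QSet {w : ℂ} (hw : w ∈ fundCell) {q : ℤ × ℤ} (hq : q ≠ 0) :
    w - latPt q ∉ QSet := by
  obtain ⟨⟨hw₁, hw₂⟩, ⟨hw₃, hw₄⟩⟩ := hw
  rintro ⟨⟨hre₀, hre₁⟩, ⟨him₀, him₁⟩⟩
  simp only [sub_re, sub_im, latPt_re, latPt_im] at hre₀ hre₁ him₀ him₁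
  have h₁ : (-1 : ℝ) < q.1 ∧ (q.1 : ℝ) < 1 := ⟨by linarith, by linarith⟩
  have h₂ : (-1 : ℝ) < q.2 ∧ (q.2 : ℝ) < 1 := ⟨by linarith, by linarith⟩
  norm_cast at h₁ h₂
  exact hq (Prod.ext (by rw [Prod.fst_zero]; omega) (by rw [Prod.snd_zero]; omega))

lemma countable_SLat (S : Finset ℂ) : (SLat S).Countable := by
  refine (S.countable_toSet.biUnion fun s _ => countable_range (s + latPt ·)).mono ?_
  rintro z ⟨s, hs, p, rfl⟩
  exact mem_biUnion hs ⟨p, rfl⟩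
lemma summable_one_div_one_add_norm_latPt_rpow {b : ℝ} (hb : 2 < b) :
    Summable fun q : ℤ × ℤ => 1 / (1 + ‖latPt q‖) ^ b := by
  refine ((finTwoArrowEquiv ℤ).symm.summable_iff.mpr
    (EisensteinSeries.summable_one_div_norm_rpow hb)).of_norm_bounded_eventually ?_
  filter_upwards [eventually_cofinite_ne 0] with q hq
  set x := (finTwoArrowEquiv ℤ).symm q
  have hx₀ : 0 < ‖x‖ :=
    norm_pos_iff.mpr (by simpa [x] using (finTwoArrowEquiv ℤ).symm.injective.ne hq)
  have hxq : ‖x‖ ≤ ‖latPt q‖ := by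
    refine (pi_norm_le_iff_of_nonneg (norm_nonneg _)).mpr fun i => ?_
    fin_cases i
    · simpa [x, Int.norm_eq_abs] using abs_re_le_norm (latPt q)
    · simpa [x, Int.norm_eq_abs] using abs_im_le_norm (latPt q)
  rw [Real.norm_of_nonneg (by positivity), Function.comp_apply, Real.rpow_neg hx₀.le, ← one_div]
  exact one_div_le_one_div_of_le (Real.rpow_pos_of_pos hx₀ _)
    (Real.rpow_le_rpow hx₀.le (by linarith) (by linarith))

section Domination

variable {Ω : Set ℂ} {ϕ : ℂ → ℂ} {b d K : ℝ}

lemma rpow_mul_norm_sub_latPt_le (hb : 0 ≤ b) (hd : 0 ≤ d) (hK₀ : 0 ≤ K)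
    (hK : ∀ w ∈ Metric.closedBall 0 6 \ QSet, ‖ϕ w‖ ≤ K)
    (hdecay : ∀ z ∈ Ω, z ∉ closure QSet → (1 + ‖z‖) ^ b * ‖ϕ z‖ ≤ d)
    {w : ℂ} (hw : w ∈ fundCell) {q : ℤ × ℤ} (hq : q ≠ 0) (hΩ : w - latPt q ∈ Ω) :
    (1 + ‖latPt q‖) ^ b * ‖ϕ (w - latPt q)‖ ≤ 5 ^ b * K + 2 ^ b * d := by
  have hw₂ := norm_lt_two_of_mem_fundCell hw
  have htri := norm_le_norm_add_norm_sub w (latPt q)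
  by_cases hq₄ : ‖latPt q‖ ≤ 4
  · have hnear : ‖ϕ (w - latPt q)‖ ≤ K := by
      refine hK _ ⟨?_, sub_latPt_notMem_QSet hw hq⟩
      rw [Metric.mem_closedBall, dist_zero_right]
      linarith [norm_sub_le w (latPt q)]
    have hpow : (1 + ‖latPt q‖) ^ b ≤ 5 ^ b := Real.rpow_le_rpow (by positivity) (by linarith) hb
    calc _ ≤ 5 ^ b * K := mul_le_mul hpow hnear (norm_nonneg _) (by positivity)
      _ ≤ _ := le_add_of_nonneg_right (by positivity)
  · have hfar : w - latPt q ∉ closure QSet := fun h => by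
      have := closure_QSet_subset_closedBall h
      rw [Metric.mem_closedBall, dist_zero_right] at this
      linarith
    have hpow : (1 + ‖latPt q‖) ^ b ≤ 2 ^ b * (1 + ‖w - latPt q‖) ^ b := by
      rw [← Real.mul_rpow (by norm_num) (by positivity)]
      exact Real.rpow_le_rpow (by positivity) (by linarith) hb
    calc _ ≤ 2 ^ b * ((1 + ‖w - latPt q‖) ^ b * ‖ϕ (w - latPt q)‖) := by
          rw [← mul_assoc]; gcongr
      _ ≤ 2 ^ b * d := by gcongr; exact hdecay _ hΩ hfar
      _ ≤ _ := le_add_of_nonneg_left (by positivity)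

lemma exists_summable_dominating_translates (hper : ∀ z ∈ Ω, ∀ p : ℤ × ℤ, z + latPt p ∈ Ω)
    (hϕ : ContinuousOn ϕ QSetᶜ) (hb : 2 < b) (hd : 0 ≤ d)
    (hdecay : ∀ z ∈ Ω, z ∉ closure QSet → (1 + ‖z‖) ^ b * ‖ϕ z‖ ≤ d) :
    ∃ g : ℤ × ℤ → ℝ, Summable g ∧ 0 ≤ g ∧
      ∀ z ∈ Ω, ∀ m ≠ latFloor z, ‖ϕ (z - latPt m)‖ ≤ g (m - latFloor z) := by
  obtain ⟨K, hK⟩ := ((isCompact_closedBall 0 6).diff isOpen_QSet).exists_bound_of_continuousOn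
    (hϕ.mono fun _ h => h.2)
  set A := 5 ^ b * max K 0 + 2 ^ b * d
  refine ⟨fun q => A / (1 + ‖latPt q‖) ^ b,
    ((summable_one_div_one_add_norm_latPt_rpow hb).mul_left A).congr fun q => mul_one_div _ _,
    fun q => by positivity, fun z hz m hm => ?_⟩
  have hzm : z - latPt m = (z - latPt (latFloor z)) - latPt (m - latFloor z) := by
    rw [latPt_sub]; ring
  have hΩ : z - latPt m ∈ Ω := by simpa [latPt_neg, ← sub_eq_add_neg] using hper z hz (-m)
  rw [hzm] at hΩ ⊢
  rw [le_div_iff₀ (by positivity), mul_comm]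
  exact rpow_mul_norm_sub_latPt_le (by linarith) hd (le_max_right _ _)
    (fun w hw => (hK w hw).trans (le_max_left _ _)) hdecay (sub_latPt_latFloor_mem_fundCell z)
    (sub_ne_zero.mpr hm) hΩ

end Domination

lemma norm_ofReal_two_rpow_neg_sub_one_le {ρ x : ℝ} (hρ : 0 ≤ ρ) (hx : 0 ≤ x) :
    ‖ofReal ((2 : ℝ) ^ (-(ρ * x))) - 1‖ ≤ min 1 (ρ * x) := by
  have hρx := mul_nonneg hρ hx
  have h₀ : 0 < (2 : ℝ) ^ (-(ρ * x)) := by positivity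
  have h₁ : (2 : ℝ) ^ (-(ρ * x)) ≤ 1 :=
    Real.rpow_le_one_of_one_le_of_nonpos one_le_two (neg_nonpos.mpr hρx)
  have h₂ : 1 - ρ * x ≤ (2 : ℝ) ^ (-(ρ * x)) := by
    rw [Real.rpow_def_of_pos two_pos]
    have := Real.add_one_le_exp (Real.log 2 * -(ρ * x))
    nlinarith [Real.log_two_lt_d9, Real.log_nonneg one_le_two]
  rw [← ofReal_one, ← ofReal_sub, norm_real, Real.norm_of_nonpos (by linarith)]
  exact le_min (by linarith) (by linarith)

lemma norm_le_of_forall_mem_diff_countable {E : Type*} [NormedAddCommGroup E] {U C : Set ℂ}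
    {f : ℂ → E} {B : ℝ} (hU : IsOpen U) (hC : C.Countable) (hf : ContinuousOn f U)
    (hB : ∀ z ∈ U \ C, ‖f z‖ ≤ B) {z : ℂ} (hz : z ∈ U) : ‖f z‖ ≤ B :=
  ContinuousWithinAt.closure_le ((hC.dense_compl ℝ).open_subset_closure_inter hU hz)
    (hf.continuousAt (hU.mem_nhds hz)).norm.continuousWithinAt continuousWithinAt_const hB

lemma exists_pos_forall_norm_le_of_tendsto {E : Type*} [NormedAddCommGroup E] {Ω C : Set ℂ}
    (hΩ : IsOpen Ω) (hC : C.Countable) {F : ℝ → ℂ → E} (hF : ∀ ρ ∈ Ioo (0 : ℝ) 1, ContinuousOn (F ρ) Ω) {h : ℝ → ℝ}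
    (hh : Tendsto h (𝓝[>] 0) (𝓝 0)) (hFh : ∀ ρ ∈ Ioo (0 : ℝ) 1, ∀ z ∈ Ω \ C, ‖F ρ z‖ ≤ h ρ)
    {ε : ℝ} (hε : 0 < ε) : ∃ ρ₀ > 0, ∀ ρ ∈ Ioo 0 ρ₀, ∀ z ∈ Ω, ‖F ρ z‖ ≤ ε := by
  obtain ⟨ρ₀, hρ₀, hsub⟩ := mem_nhdsGT_iff_exists_Ioo_subset.mp <|
    inter_mem (Ioo_mem_nhdsGT one_pos) (hh.eventually (ge_mem_nhds hε))
  refine ⟨ρ₀, hρ₀, fun ρ hρ z hz => ?_⟩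
  obtain ⟨hρ₁, hρε⟩ := hsub hρ
  exact (norm_le_of_forall_mem_diff_countable hΩ hC (hF ρ hρ₁) (hFh ρ hρ₁) hz).trans hρε

section Series

variable {ι : Type*}

lemma norm_tsum_sub_le_of_norm_le {E : Type*} [NormedAddCommGroup E] [CompleteSpace E]
    {f : ι → E} {G : ι → ℝ} {n : ι} (hG : Summable G) (hG₀ : 0 ≤ G n)
    (hf : ∀ m ≠ n, ‖f m‖ ≤ G m) : ‖∑' m, f m - f n‖ ≤ ∑' m, G m := by
  classical
  have hfs : Summable f := hG.of_norm_bounded_eventually ((eventually_cofinite_ne n).mono hf)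
  rw [hfs.tsum_eq_add_tsum_ite n, add_sub_cancel_left]
  refine tsum_of_norm_bounded hG.hasSum fun m => ?_
  split_ifs with h
  · simpa [h] using hG₀
  · exact hf m h

lemma norm_tsum_mul_div_tsum_sub_one_le [AddGroup ι] {a w : ι → ℂ} {g u : ι → ℝ} {n : ι}
    {c : ℝ} (hg : Summable g) (hg₀ : 0 ≤ g) (hug : Summable fun q => u q * g q)
    (ha : ∀ m ≠ n, ‖a m‖ ≤ g (m - n)) (hw : ∀ m, ‖w m - 1‖ ≤ u (m - n))
    (hc : 0 < c) (hac : c ≤ ‖∑' m, a m‖) :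
    ‖(∑' m, w m * a m) / (∑' m, a m) - 1‖ ≤
      u 0 + (u 0 * ∑' q, g q + ∑' q, u q * g q) / c := by
  have hu₀ : 0 ≤ u := fun q => (norm_nonneg _).trans (by simpa using hw (q + n))
  have hshift (F : ι → ℝ) : ∑' m, F (m - n) = ∑' q, F q := (Equiv.subRight n).tsum_eq F
  have hshift_summable {F : ι → ℝ} (hF : Summable F) : Summable fun m => F (m - n) :=
    (Equiv.subRight n).summable_iff.mpr hF
  have hwa_le : ∀ m ≠ n, ‖(w m - 1) * a m‖ ≤ u (m - n) * g (m - n) := fun m hm => by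
    rw [norm_mul]; exact mul_le_mul (hw m) (ha m hm) (norm_nonneg _) (hu₀ _)
  have has : Summable a :=
    (hshift_summable hg).of_norm_bounded_eventually ((eventually_cofinite_ne n).mono ha)
  have hwas : Summable fun m => (w m - 1) * a m :=
    (hshift_summable hug).of_norm_bounded_eventually ((eventually_cofinite_ne n).mono hwa_le)
  have han : ‖∑' m, a m - a n‖ ≤ ∑' q, g q :=
    hshift g ▸ norm_tsum_sub_le_of_norm_le (hshift_summable hg) (by simpa using hg₀ 0) ha
  have hwan : ‖∑' m, (w m - 1) * a m - (w n - 1) * a n‖ ≤ ∑' q, u q * g q :=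
    hshift (fun q => u q * g q) ▸ norm_tsum_sub_le_of_norm_le (hshift_summable hug)
      (by simpa using mul_nonneg (hu₀ 0) (hg₀ 0)) hwa_le
  set φ := ∑' m, a m
  have hφ : 0 < ‖φ‖ := hc.trans_le hac
  have hnum : ∑' m, w m * a m - φ = ∑' m, (w m - 1) * a m := by
    rw [← ((hwas.add has).congr fun m => by ring).tsum_sub has]
    exact tsum_congr fun m => by ring
  have hbound : ‖∑' m, (w m - 1) * a m‖ ≤ u 0 * (‖φ‖ + ∑' q, g q) + ∑' q, u q * g q := by
    have hterm : ‖(w n - 1) * a n‖ ≤ u 0 * (‖φ‖ + ∑' q, g q) := by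
      rw [norm_mul]
      refine mul_le_mul (by simpa using hw n) ?_ (norm_nonneg _) (hu₀ 0)
      linarith [norm_le_norm_add_norm_sub φ (a n)]
    linarith [norm_le_norm_add_norm_sub' (∑' m, (w m - 1) * a m) ((w n - 1) * a n)]
  have hK₀ : 0 ≤ ∑' q, g q := tsum_nonneg hg₀
  have hT₀ : 0 ≤ ∑' q, u q * g q := tsum_nonneg fun q => mul_nonneg (hu₀ q) (hg₀ q)
  have hu₀₀ : 0 ≤ u 0 := hu₀ 0
  rw [div_sub_one (norm_pos_iff.mp hφ), hnum, norm_div]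
  calc _ ≤ (u 0 * (‖φ‖ + ∑' q, g q) + ∑' q, u q * g q) / ‖φ‖ := by gcongr
    _ = u 0 + (u 0 * ∑' q, g q + ∑' q, u q * g q) / ‖φ‖ := by field_simp; ring
    _ ≤ _ := add_le_add_right
      (div_le_div_of_nonneg_left (add_nonneg (mul_nonneg hu₀₀ hK₀) hT₀) hc hac) _

lemma summable_min_one_mul {g s : ι → ℝ} (hg : Summable g) (hg₀ : 0 ≤ g) {ρ : ℝ}
    (hs : ∀ q, 0 ≤ ρ * s q) : Summable fun q => min 1 (ρ * s q) * g q :=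
  hg.of_nonneg_of_le (fun q => mul_nonneg (le_min zero_le_one (hs q)) (hg₀ q))
    fun q => mul_le_of_le_one_left (hg₀ q) (min_le_left _ _)

lemma tendsto_min_one_add_div_nhdsGT [Zero ι] {g s : ι → ℝ} (hg : Summable g) (hg₀ : 0 ≤ g)
    (hs : 0 ≤ s) (c : ℝ) :
    Tendsto (fun ρ => min 1 (ρ * s 0) +
      (min 1 (ρ * s 0) * ∑' q, g q + ∑' q, min 1 (ρ * s q) * g q) / c) (𝓝[>] 0) (𝓝 0) := by
  have hmin (q : ι) : Tendsto (fun ρ => min 1 (ρ * s q)) (𝓝[>] 0) (𝓝 0) := by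
    have := ((continuous_const.min (continuous_id.mul continuous_const)).tendsto 0).mono_left
      (nhdsWithin_le_nhds (s := Ioi 0)) (f := fun ρ : ℝ => min 1 (ρ * s q))
    simpa using this
  have htail := tendsto_tsum_of_dominated_convergence (f := fun ρ q => min 1 (ρ * s q) * g q)
    hg (fun q => by simpa using (hmin q).mul_const (g q)) <| by
      filter_upwards [self_mem_nhdsWithin] with ρ hρ q
      rw [Real.norm_of_nonneg (mul_nonneg (le_min zero_le_one (mul_nonneg hρ.le (hs q))) (hg₀ q))]
      exact mul_le_of_le_one_left (hg₀ q) (min_le_left _ _)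
  simpa using (hmin 0).add ((((hmin 0).mul_const _).add htail).div_const c)

end Series

theorem stmt3_general
    (Ω : Set ℂ) (hΩopen : IsOpen Ω)
    (hper : ∀ z ∈ Ω, ∀ p : ℤ × ℤ, z + latPt p ∈ Ω)
    (S : Finset ℂ) (hSQ : (S : Set ℂ) ⊆ QSet)
    (ϕ : ℂ → ℂ)
    (hana : AnalyticOnNhd ℂ ϕ ((S : Set ℂ)ᶜ))
    (b d : ℝ) (hb : 2 < b) (hd : 0 ≤ d)
    (hdecay : ∀ z ∈ Ω, z ∉ closure QSet →
      (1 + ‖z‖) ^ b * ‖ϕ z‖ ≤ d)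
    (hlb : ∃ c > (0:ℝ), ∀ z ∈ Ω \ SLat S,
      c ≤ ‖∑' p : ℤ × ℤ, ϕ (z - latPt p)‖)
    (Ψ : ℝ → ℂ → ℂ)
    (hΨana : ∀ ρ ∈ Set.Ioc (0:ℝ) 1, AnalyticOnNhd ℂ (Ψ ρ) Ω)
    (hΨeq : ∀ ρ ∈ Set.Ioc (0:ℝ) 1, ∀ z ∈ Ω \ SLat S,
      Ψ ρ z = (∑' p : ℤ × ℤ,
          (Complex.ofReal ((2:ℝ) ^ (-(ρ * ‖latPt p‖)))) * ϕ (z - latPt p)) /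
        (∑' p : ℤ × ℤ, ϕ (z - latPt p)))
    :
    (∃ C > (0:ℝ), ∀ ρ ∈ Set.Ioc (0:ℝ) 1, ∀ z ∈ Ω, ‖Ψ ρ z‖ ≤ C) ∧
    (∀ M : ℝ, 1 ≤ M → ∀ ε > (0:ℝ), ∃ ρ₀ > (0:ℝ),
      ∀ ρ ∈ Set.Ioo (0:ℝ) ρ₀, ∀ z ∈ Ω,
        |z.re| ≤ M → |z.im| ≤ M → ‖Ψ ρ z - 1‖ ≤ ε) := by
  obtain ⟨c, hc, hlb⟩ := hlb
  obtain ⟨g, hg, hg₀, hdom⟩ := exists_summable_dominating_translates hper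
    (fun z hz => (hana z fun hzS => hz (hSQ hzS)).continuousAt.continuousWithinAt) hb hd hdecay
  have key : ∀ ρ ∈ Ioc (0 : ℝ) 1, ∀ z ∈ Ω \ SLat S, ∀ u : ℤ × ℤ → ℝ,
      Summable (fun q => u q * g q) → (∀ m, min 1 (ρ * ‖latPt m‖) ≤ u (m - latFloor z)) →
      ‖Ψ ρ z - 1‖ ≤ u 0 + (u 0 * ∑' q, g q + ∑' q, u q * g q) / c := fun ρ hρ z hz u hu hmin => by
    rw [hΨeq ρ hρ z hz]
    exact norm_tsum_mul_div_tsum_sub_one_le hg hg₀ hu (hdom z hz.1) (fun m =>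
      (norm_ofReal_two_rpow_neg_sub_one_le hρ.1.le (norm_nonneg _)).trans (hmin m)) hc (hlb z hz)
  have hK₀ : 0 ≤ ∑' q, g q := tsum_nonneg hg₀
  refine ⟨⟨2 + 2 * (∑' q, g q) / c, by positivity, fun ρ hρ z hz => ?_⟩, fun M hM ε hε => ?_⟩
  · refine norm_le_of_forall_mem_diff_countable hΩopen (countable_SLat S)
      (hΨana ρ hρ).continuousOn (fun z hz => ?_) hz
    have := key ρ hρ z hz (fun _ => 1) (by simpa using hg) fun m => min_le_left _ _
    simp only [one_mul, ← two_mul] at this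
    linarith [norm_le_norm_add_norm_sub' (Ψ ρ z) 1, norm_one (α := ℂ)]
  · set s : ℤ × ℤ → ℝ := fun q => 2 * M + 1 + 2 + ‖latPt q‖
    have hs : 0 ≤ s := fun q => add_nonneg (by linarith) (norm_nonneg _)
    obtain ⟨ρ₀, hρ₀, hΨ⟩ := exists_pos_forall_norm_le_of_tendsto (F := fun ρ z => Ψ ρ z - 1)
      (hΩopen.inter Metric.isOpen_ball) (countable_SLat S)
      (fun ρ hρ => ((hΨana ρ (Ioo_subset_Ioc_self hρ)).continuousOn.mono
        inter_subset_left).sub continuousOn_const)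
      (tendsto_min_one_add_div_nhdsGT hg hg₀ hs c) (fun ρ hρ z hz =>
        key ρ (Ioo_subset_Ioc_self hρ) z ⟨hz.1.1, hz.2⟩ (fun q => min 1 (ρ * s q))
          (summable_min_one_mul hg hg₀ fun q => mul_nonneg hρ.1.le (hs q))
          fun m => min_le_min_left _ (mul_le_mul_of_nonneg_left
            (norm_latPt_le_add_norm_latPt_sub_latFloor (mem_ball_zero_iff.mp hz.1.2) m) hρ.1.le))
      hε
    refine ⟨ρ₀, hρ₀, fun ρ hρ z hz hre him => hΨ ρ hρ z ⟨hz, ?_⟩⟩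
    rw [mem_ball_zero_iff]
    linarith [norm_le_abs_re_add_abs_im z]

/-- uniform boundedness of the family `Ψ_ρ` on `Ω`, and uniform convergence `Ψ_ρ → 1` on bounded parts of `Ω` as `ρ → 0⁺`. -/
theorem stmt3
    (Ω : Set ℂ) (hΩopen : IsOpen Ω) (hΩne : Ω.Nonempty)
    (hper : ∀ z ∈ Ω, ∀ p : ℤ × ℤ, z + latPt p ∈ Ω)
    (S : Finset ℂ) (hSQ : (S : Set ℂ) ⊆ QSet)
    (ϕ : ℂ → ℂ) (hmero : MeromorphicOn ϕ Set.univ)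
    (hana : AnalyticOnNhd ℂ ϕ ((S : Set ℂ)ᶜ))
    (b d : ℝ) (hb : 2 < b) (hd : 0 ≤ d)
    (hdecay : ∀ z ∈ Ω, z ∉ closure QSet →
      (1 + ‖z‖) ^ b * ‖ϕ z‖ ≤ d)
    (hsum : ∀ z ∈ Ω \ SLat S,
      Summable (fun p : ℤ × ℤ => ‖ϕ (z - latPt p)‖))
    (hnz : ∀ z ∈ closure Ω \ SLat S, (∑' p : ℤ × ℤ, ϕ (z - latPt p)) ≠ 0)
    (hlb : ∃ c > (0:ℝ), ∀ z ∈ Ω \ SLat S,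
      c ≤ ‖∑' p : ℤ × ℤ, ϕ (z - latPt p)‖)
    (Ψ : ℝ → ℂ → ℂ)
    (hΨana : ∀ ρ ∈ Set.Ioc (0:ℝ) 1, AnalyticOnNhd ℂ (Ψ ρ) Ω)
    (hΨeq : ∀ ρ ∈ Set.Ioc (0:ℝ) 1, ∀ z ∈ Ω \ SLat S,
      Ψ ρ z = (∑' p : ℤ × ℤ,
          (Complex.ofReal ((2:ℝ) ^ (-(ρ * ‖latPt p‖)))) * ϕ (z - latPt p)) /
        (∑' p : ℤ × ℤ, ϕ (z - latPt p)))
    :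
    (∃ C > (0:ℝ), ∀ ρ ∈ Set.Ioc (0:ℝ) 1, ∀ z ∈ Ω, ‖Ψ ρ z‖ ≤ C) ∧
    (∀ M : ℝ, 1 ≤ M → ∀ ε > (0:ℝ), ∃ ρ₀ > (0:ℝ),
      ∀ ρ ∈ Set.Ioo (0:ℝ) ρ₀, ∀ z ∈ Ω,
        |z.re| ≤ M → |z.im| ≤ M → ‖Ψ ρ z - 1‖ ≤ ε) :=
  stmt3_general Ω hΩopen hper S hSQ ϕ hana b d hb hd hdecay hlb Ψ hΨana hΨeq
end
end

section
/- Suppose that for each ρ ∈ (0,1], Ψ_ρ : Ω → ℂ is analytic on Ω and satisfies Ψ_ρ(z) = φ^{(ρ)}(z)/φ(z) for all z ∈ Ω ∖ (S + Λ), where φ^{(ρ)}(z) = ∑_{m∈Λ} 2^{−ρ|m|} ϕ(z − m). Then for every f ∈ L²(Ω) (with respect to planar Lebesgue measure), ∫_Ω |f(z) Ψ_ρ(z) − f(z)|² dA(z) → 0 as ρ → 0⁺. -/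
/-!
Only one lattice translate `z - m` can lie near a pole of `ϕ`, since the poles sit in the open
unit square. Away from the poles `ϕ` is bounded by a multiple of `(1 + |w|)^(-b)`, whose lattice
sums are bounded uniformly in `z` because `b > 2`. Hence `∑ |ϕ(z - m)| ≤ |φ(z)| + A`, and with
`|φ| ≥ c` this bounds `Ψ_ρ` uniformly by `1 + A / c`. As `ρ → 0` the weights `2^(-ρ|m|)` increase
to `1`, so `Ψ_ρ → 1` off the null set `S + Λ`, and dominated convergence (with dominating function
`(2 + A / c)² |f|²`) gives the claim.
-/

open Complex MeasureTheory Set Filter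

noncomputable section

open Topology

lemma latPt_add (p q : ℤ × ℤ) : latPt (p + q) = latPt p + latPt q := by
  apply Complex.ext <;> simp

lemma QSet_eq_reProdIm : QSet = Ioo 0 1 ×ℂ Ioo 0 1 := rfl

lemma closure_QSet : closure QSet = Icc 0 1 ×ℂ Icc 0 1 := by
  rw [QSet_eq_reProdIm, closure_reProdIm, closure_Ioo zero_ne_one]

lemma norm_le_two_of_mem_closure_QSet {w : ℂ} (hw : w ∈ closure QSet) : ‖w‖ ≤ 2 := by
  rw [closure_QSet] at hw
  obtain ⟨⟨h₁, h₂⟩, h₃, h₄⟩ := hw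
  calc ‖w‖ ≤ |w.re| + |w.im| := norm_le_abs_re_add_abs_im w
    _ ≤ 2 := by rw [abs_of_nonneg h₁, abs_of_nonneg h₃]; linarith

lemma isCompact_closure_QSet : IsCompact (closure QSet) :=
  (isCompact_closedBall (0 : ℂ) 2).of_isClosed_subset isClosed_closure
    fun _ hw => mem_closedBall_zero_iff.2 (norm_le_two_of_mem_closure_QSet hw)

lemma eq_floor_of_sub_latPt_mem_QSet {z : ℂ} {p : ℤ × ℤ} (h : z - latPt p ∈ QSet) :
    p = (⌊z.re⌋, ⌊z.im⌋) := by
  obtain ⟨⟨h₁, h₂⟩, h₃, h₄⟩ := h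
  simp only [sub_re, sub_im, latPt_re, latPt_im] at h₁ h₂ h₃ h₄
  ext <;> symm <;> rw [Int.floor_eq_iff] <;> constructor <;> linarith

lemma norm_sub_latPt_round_le_one (z : ℂ) : ‖z - latPt (round z.re, round z.im)‖ ≤ 1 := by
  have h₁ := abs_sub_round z.re
  have h₂ := abs_sub_round z.im
  calc ‖z - latPt (round z.re, round z.im)‖
      ≤ |z.re - round z.re| + |z.im - round z.im| := by
        simpa using norm_le_abs_re_add_abs_im (z - latPt (round z.re, round z.im))
    _ ≤ 1 := by linarith

lemma summable_one_add_norm_latPt_rpow {b : ℝ} (hb : 2 < b) :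
    Summable fun q : ℤ × ℤ => (1 + ‖latPt q‖) ^ (-b) := by
  have hsup := (finTwoArrowEquiv ℤ).symm.summable_iff.2
    (EisensteinSeries.summable_one_div_norm_rpow hb)
  refine Summable.of_norm_bounded_eventually hsup ?_
  filter_upwards [eventually_cofinite_ne 0] with q hq
  have hle : ‖![q.1, q.2]‖ ≤ ‖latPt q‖ := by
    refine (pi_norm_le_iff_of_nonneg (norm_nonneg _)).2 fun i => ?_
    fin_cases i
    · simpa [Int.norm_eq_abs] using abs_re_le_norm (latPt q)
    · simpa [Int.norm_eq_abs] using abs_im_le_norm (latPt q)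
  have hpos : 0 < ‖![q.1, q.2]‖ := by
    refine norm_pos_iff.2 fun h => hq ?_
    ext
    · simpa using congr_fun h 0
    · simpa using congr_fun h 1
  rw [Real.norm_of_nonneg (by positivity)]
  change _ ≤ ‖![q.1, q.2]‖ ^ (-b)
  exact Real.rpow_le_rpow_of_nonpos hpos (by linarith) (by linarith)

lemma one_add_norm_sub_latPt_add_round_rpow_le {b : ℝ} (hb : 0 ≤ b) (z : ℂ) (q : ℤ × ℤ) :
    (1 + ‖z - latPt (q + (round z.re, round z.im))‖) ^ (-b) ≤ 2 ^ b * (1 + ‖latPt q‖) ^ (-b) := by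
  set n : ℤ × ℤ := (round z.re, round z.im)
  have hq : 1 + ‖latPt q‖ ≤ 2 * (1 + ‖z - latPt (q + n)‖) := by
    have h := norm_sub_le (z - latPt n) (z - latPt (q + n))
    have e : latPt (q + n) - latPt n = latPt q := by rw [latPt_add, add_sub_cancel_right]
    rw [sub_sub_sub_cancel_left, e] at h
    linarith [norm_sub_latPt_round_le_one z, norm_nonneg (z - latPt (q + n))]
  calc (1 + ‖z - latPt (q + n)‖) ^ (-b) = 2 ^ b * (2 * (1 + ‖z - latPt (q + n)‖)) ^ (-b) := by
        rw [Real.mul_rpow (by norm_num) (by positivity), ← mul_assoc, ← Real.rpow_add (by norm_num),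
          add_neg_cancel, Real.rpow_zero, one_mul]
    _ ≤ 2 ^ b * (1 + ‖latPt q‖) ^ (-b) :=
        mul_le_mul_of_nonneg_left (Real.rpow_le_rpow_of_nonpos (by positivity) hq (neg_nonpos.2 hb))
          (by positivity)

lemma summable_one_add_norm_sub_latPt_rpow {b : ℝ} (hb : 2 < b) (z : ℂ) :
    Summable fun p : ℤ × ℤ => (1 + ‖z - latPt p‖) ^ (-b) := by
  rw [← (Equiv.addRight (round z.re, round z.im)).summable_iff]
  exact ((summable_one_add_norm_latPt_rpow hb).mul_left (2 ^ b)).of_nonneg_of_le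
    (fun _ => Real.rpow_nonneg (by positivity) _)
    (one_add_norm_sub_latPt_add_round_rpow_le (by linarith) z)

lemma tsum_one_add_norm_sub_latPt_rpow_le {b : ℝ} (hb : 2 < b) (z : ℂ) :
    ∑' p : ℤ × ℤ, (1 + ‖z - latPt p‖) ^ (-b) ≤ 2 ^ b * ∑' q : ℤ × ℤ, (1 + ‖latPt q‖) ^ (-b) := by
  rw [← (Equiv.addRight (round z.re, round z.im)).tsum_eq, ← tsum_mul_left]
  exact ((Equiv.addRight _).summable_iff.2 (summable_one_add_norm_sub_latPt_rpow hb z)).tsum_le_tsum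
    (one_add_norm_sub_latPt_add_round_rpow_le (by linarith) z)
    ((summable_one_add_norm_latPt_rpow hb).mul_left _)

lemma norm_ofReal_two_rpow_neg_mul_le_one {ρ a : ℝ} (hρ : 0 ≤ ρ) (ha : 0 ≤ a) :
    ‖(((2 : ℝ) ^ (-(ρ * a)) : ℝ) : ℂ)‖ ≤ 1 := by
  rw [norm_real, Real.norm_of_nonneg (by positivity)]
  exact Real.rpow_le_one_of_one_le_of_nonpos one_le_two (neg_nonpos.2 (mul_nonneg hρ ha))

lemma tendsto_tsum_two_rpow_neg_mul {ι : Type*} {a : ι → ℝ} (ha : ∀ i, 0 ≤ a i) {g : ι → ℂ}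
    (hg : Summable fun i => ‖g i‖) :
    Tendsto (fun ρ : ℝ => ∑' i, (((2 : ℝ) ^ (-(ρ * a i)) : ℝ) : ℂ) * g i) (𝓝[>] 0)
      (𝓝 (∑' i, g i)) := by
  refine tendsto_tsum_of_dominated_convergence hg (fun i => ?_) ?_
  · have hcont : Continuous fun ρ : ℝ => (((2 : ℝ) ^ (-(ρ * a i)) : ℝ) : ℂ) * g i := by
      fun_prop (disch := norm_num)
    simpa using (hcont.tendsto 0).mono_left nhdsWithin_le_nhds
  · filter_upwards [self_mem_nhdsWithin] with ρ (hρ : 0 < ρ) i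
    rw [norm_mul]
    exact mul_le_of_le_one_left (norm_nonneg _) (norm_ofReal_two_rpow_neg_mul_le_one hρ.le (ha i))

lemma tsum_norm_le_norm_tsum_add_two_mul {ι E : Type*} [NormedAddCommGroup E] [CompleteSpace E]
    {g : ι → E} {h : ι → ℝ} (hg : Summable fun i => ‖g i‖) (hh : Summable h)
    (hh₀ : ∀ i, 0 ≤ h i) (i₀ : ι) (hgh : ∀ i ≠ i₀, ‖g i‖ ≤ h i) :
    ∑' i, ‖g i‖ ≤ ‖∑' i, g i‖ + 2 * ∑' i, h i := by
  classical
  set r : ι → E := fun i => if i = i₀ then 0 else g i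
  have hr : ∀ i, ‖r i‖ = if i = i₀ then 0 else ‖g i‖ := fun i => by
    simp only [r, apply_ite norm, norm_zero]
  have hr_le : ∀ i, ‖r i‖ ≤ h i := fun i => by
    rw [hr]
    split_ifs with hi
    exacts [hh₀ i, hgh i hi]
  have hr_sum : Summable fun i => ‖r i‖ := hh.of_nonneg_of_le (fun _ => norm_nonneg _) hr_le
  have hR : ∑' i, ‖r i‖ ≤ ∑' i, h i := hr_sum.tsum_le_tsum hr_le hh
  have hg₀ : ‖g i₀‖ ≤ ‖∑' i, g i‖ + ∑' i, ‖r i‖ := by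
    have hsplit : ∑' i, g i = g i₀ + ∑' i, r i := hg.of_norm.tsum_eq_add_tsum_ite i₀
    calc ‖g i₀‖ = ‖∑' i, g i - ∑' i, r i‖ := by rw [hsplit, add_sub_cancel_right]
      _ ≤ ‖∑' i, g i‖ + ‖∑' i, r i‖ := norm_sub_le _ _
      _ ≤ ‖∑' i, g i‖ + ∑' i, ‖r i‖ := by gcongr; exact norm_tsum_le_tsum_norm hr_sum
  have hsplit : ∑' i, ‖g i‖ = ‖g i₀‖ + ∑' i, ‖r i‖ := by
    simp only [hr]; exact hg.tsum_eq_add_tsum_ite i₀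
  linarith

lemma norm_tsum_mul_div_tsum_le {ι 𝕜 : Type*} [NormedField 𝕜] {g w : ι → 𝕜} {A c : ℝ}
    (hg : Summable fun i => ‖g i‖) (hw : ∀ i, ‖w i‖ ≤ 1) (hA₀ : 0 ≤ A)
    (hA : ∑' i, ‖g i‖ ≤ ‖∑' i, g i‖ + A) (hc : 0 < c) (hcg : c ≤ ‖∑' i, g i‖) :
    ‖(∑' i, w i * g i) / ∑' i, g i‖ ≤ 1 + A / c := by
  have hwg : ∀ i, ‖w i * g i‖ ≤ ‖g i‖ := fun i => by
    rw [norm_mul]; exact mul_le_of_le_one_left (norm_nonneg _) (hw i)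
  have hnum : ‖∑' i, w i * g i‖ ≤ ‖∑' i, g i‖ + A :=
    calc ‖∑' i, w i * g i‖ ≤ ∑' i, ‖w i * g i‖ :=
          norm_tsum_le_tsum_norm (hg.of_nonneg_of_le (fun _ => norm_nonneg _) hwg)
      _ ≤ ∑' i, ‖g i‖ := (hg.of_nonneg_of_le (fun _ => norm_nonneg _) hwg).tsum_le_tsum hwg hg
      _ ≤ _ := hA
  have hpos : 0 < ‖∑' i, g i‖ := hc.trans_le hcg
  rw [norm_div, div_le_iff₀ hpos, add_mul, one_mul]
  have : A ≤ A / c * ‖∑' i, g i‖ := by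
    rw [div_mul_eq_mul_div, le_div_iff₀ hc]; exact mul_le_mul_of_nonneg_left hcg hA₀
  linarith

lemma tendsto_integral_norm_mul_sub_sq {α ι 𝕜 : Type*} [MeasurableSpace α] [NormedField 𝕜]
    {μ : Measure α} {f : α → 𝕜} (hf : MemLp f 2 μ) {Ψ : ι → α → 𝕜} {l : Filter ι}
    [l.IsCountablyGenerated] {M : ℝ} (hmeas : ∀ᶠ ρ in l, AEStronglyMeasurable (Ψ ρ) μ)
    (hbd : ∀ᶠ ρ in l, ∀ᵐ z ∂μ, ‖Ψ ρ z‖ ≤ M) (hlim : ∀ᵐ z ∂μ, Tendsto (Ψ · z) l (𝓝 1)) :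
    Tendsto (fun ρ => ∫ z, ‖f z * Ψ ρ z - f z‖ ^ 2 ∂μ) l (𝓝 0) := by
  have hbound : Integrable (fun z => (M + 1) ^ 2 * ‖f z‖ ^ 2) μ :=
    ((hf.integrable_norm_pow (p := 2) two_ne_zero)).const_mul _
  have hdom : ∀ᶠ ρ in l, ∀ᵐ z ∂μ, ‖‖f z * Ψ ρ z - f z‖ ^ 2‖ ≤ (M + 1) ^ 2 * ‖f z‖ ^ 2 := by
    filter_upwards [hbd] with ρ hΨ
    filter_upwards [hΨ] with z hz
    have h : ‖f z * Ψ ρ z - f z‖ ≤ ‖f z‖ * (M + 1) := by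
      rw [← mul_sub_one, norm_mul]
      gcongr
      exact (norm_sub_le _ _).trans (by rw [norm_one]; linarith)
    rw [norm_pow, norm_norm, ← mul_pow, mul_comm (M + 1)]
    exact pow_le_pow_left₀ (norm_nonneg _) h 2
  have hconv : ∀ᵐ z ∂μ, Tendsto (fun ρ => ‖f z * Ψ ρ z - f z‖ ^ 2) l (𝓝 0) := by
    filter_upwards [hlim] with z hz
    have h := ((tendsto_const_nhds (x := f z)).mul hz).sub (tendsto_const_nhds (x := f z))
    simpa using h.norm.pow 2
  simpa using tendsto_integral_filter_of_dominated_convergence (f := fun _ => (0 : ℝ)) _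
    (hmeas.mono fun ρ hΨ => (((hf.1.mul hΨ).sub hf.1).norm.pow 2)) hdom hbound hconv

lemma le_dist_sub_latPt_of_ne_floor {S : Set ℂ} {δ : ℝ} (hδ : ∀ s ∈ S, Metric.ball s δ ⊆ QSet)
    (z : ℂ) : ∀ p ≠ (⌊z.re⌋, ⌊z.im⌋), ∀ s ∈ S, δ ≤ dist (z - latPt p) s := by
  intro p hp s hs
  by_contra! h
  exact hp (eq_floor_of_sub_latPt_mem_QSet (hδ s hs (Metric.mem_ball.2 h)))

lemma exists_norm_le_mul_one_add_norm_rpow {Ω : Set ℂ} {S : Finset ℂ} {ϕ : ℂ → ℂ}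
    (hana : AnalyticOnNhd ℂ ϕ (S : Set ℂ)ᶜ) {b d : ℝ}
    (hdecay : ∀ z ∈ Ω, z ∉ closure QSet → (1 + ‖z‖) ^ b * ‖ϕ z‖ ≤ d) {δ : ℝ} (hδ : 0 < δ) :
    ∃ D, 0 ≤ D ∧ ∀ w ∈ Ω, (∀ s ∈ S, δ ≤ dist w s) → ‖ϕ w‖ ≤ D * (1 + ‖w‖) ^ (-b) := by
  set R : Set ℂ := {w | ∀ s ∈ S, δ ≤ dist w s}
  have hR : IsClosed R := by
    simp only [R, ofPred_forall]
    exact isClosed_biInter fun s _ =>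
      isClosed_le continuous_const (continuous_id.dist continuous_const)
  have hRS : R ⊆ (S : Set ℂ)ᶜ := fun w hw hwS => by
    have := hw w hwS
    rw [dist_self] at this
    linarith
  have hcont : ContinuousOn (fun w => (1 + ‖w‖) ^ b * ‖ϕ w‖) (closure QSet ∩ R) :=
    ((continuous_const.add continuous_norm).continuousOn.rpow_const fun _ _ =>
      Or.inl (by positivity : 1 + ‖_‖ ≠ 0)).mul
      (hana.mono (inter_subset_right.trans hRS)).continuousOn.norm
  obtain ⟨K, hK⟩ := (isCompact_closure_QSet.inter_right hR).exists_bound_of_continuousOn hcont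
  refine ⟨max (max d K) 0, le_max_right _ _, fun w hw hwR => ?_⟩
  have hpos : 0 < (1 + ‖w‖) ^ b := by positivity
  have hbound : (1 + ‖w‖) ^ b * ‖ϕ w‖ ≤ max (max d K) 0 := by
    by_cases hwQ : w ∈ closure QSet
    · exact le_max_of_le_left (le_max_of_le_right ((Real.le_norm_self _).trans (hK w ⟨hwQ, hwR⟩)))
    · exact le_max_of_le_left (le_max_of_le_left (hdecay w hw hwQ))
  rw [Real.rpow_neg (by positivity), ← div_eq_mul_inv, le_div_iff₀ hpos, mul_comm]
  exact hbound

lemma exists_tsum_norm_sub_latPt_le {Ω : Set ℂ} (hper : ∀ z ∈ Ω, ∀ p : ℤ × ℤ, z + latPt p ∈ Ω)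
    {S : Finset ℂ} (hSQ : (S : Set ℂ) ⊆ QSet) {ϕ : ℂ → ℂ} (hana : AnalyticOnNhd ℂ ϕ (S : Set ℂ)ᶜ)
    {b d : ℝ} (hb : 2 < b) (hdecay : ∀ z ∈ Ω, z ∉ closure QSet → (1 + ‖z‖) ^ b * ‖ϕ z‖ ≤ d) :
    ∃ A, 0 ≤ A ∧ ∀ z ∈ Ω, Summable (fun p : ℤ × ℤ => ‖ϕ (z - latPt p)‖) →
      ∑' p : ℤ × ℤ, ‖ϕ (z - latPt p)‖ ≤ ‖∑' p : ℤ × ℤ, ϕ (z - latPt p)‖ + A := by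
  obtain ⟨δ, hδ, hδQ⟩ := S.finite_toSet.isCompact.exists_thickening_subset_open isOpen_QSet hSQ
  obtain ⟨D, hD, hϕD⟩ := exists_norm_le_mul_one_add_norm_rpow hana hdecay hδ
  set C := 2 ^ b * ∑' q : ℤ × ℤ, (1 + ‖latPt q‖) ^ (-b)
  have hC : 0 ≤ C := mul_nonneg (by positivity) (tsum_nonneg fun _ => by positivity)
  refine ⟨2 * (D * C), by positivity, fun z hz hg => ?_⟩
  have hreg := le_dist_sub_latPt_of_ne_floor
    (fun s hs => (Metric.ball_subset_thickening hs δ).trans hδQ) z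
  have hmem : ∀ p : ℤ × ℤ, z - latPt p ∈ Ω := fun p => by
    simpa [latPt_neg, ← sub_eq_add_neg] using hper z hz (-p)
  calc ∑' p, ‖ϕ (z - latPt p)‖
      ≤ ‖∑' p, ϕ (z - latPt p)‖ + 2 * ∑' p : ℤ × ℤ, D * (1 + ‖z - latPt p‖) ^ (-b) :=
        tsum_norm_le_norm_tsum_add_two_mul hg
          ((summable_one_add_norm_sub_latPt_rpow hb z).mul_left D) (fun _ => by positivity) _
          fun p hp => hϕD _ (hmem p) (hreg p hp)
    _ ≤ ‖∑' p, ϕ (z - latPt p)‖ + 2 * (D * C) := by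
        rw [tsum_mul_left]
        gcongr
        exact tsum_one_add_norm_sub_latPt_rpow_le hb z

theorem stmt4_general
    (Ω : Set ℂ) (hΩopen : IsOpen Ω)
    (hper : ∀ z ∈ Ω, ∀ p : ℤ × ℤ, z + latPt p ∈ Ω)
    (S : Finset ℂ) (hSQ : (S : Set ℂ) ⊆ QSet)
    (ϕ : ℂ → ℂ)
    (hana : AnalyticOnNhd ℂ ϕ ((S : Set ℂ)ᶜ))
    (b d : ℝ) (hb : 2 < b)
    (hdecay : ∀ z ∈ Ω, z ∉ closure QSet →
      (1 + ‖z‖) ^ b * ‖ϕ z‖ ≤ d)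
    (hsum : ∀ z ∈ Ω \ SLat S,
      Summable (fun p : ℤ × ℤ => ‖ϕ (z - latPt p)‖))
    (hlb : ∃ c > (0:ℝ), ∀ z ∈ Ω \ SLat S,
      c ≤ ‖∑' p : ℤ × ℤ, ϕ (z - latPt p)‖)
    (Ψ : ℝ → ℂ → ℂ)
    (hΨana : ∀ ρ ∈ Set.Ioc (0:ℝ) 1, AnalyticOnNhd ℂ (Ψ ρ) Ω)
    (hΨeq : ∀ ρ ∈ Set.Ioc (0:ℝ) 1, ∀ z ∈ Ω \ SLat S,
      Ψ ρ z = (∑' p : ℤ × ℤ,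
          (Complex.ofReal ((2:ℝ) ^ (-(ρ * ‖latPt p‖)))) * ϕ (z - latPt p)) /
        (∑' p : ℤ × ℤ, ϕ (z - latPt p)))
    (f : ℂ → ℂ) (hf : MemLp f 2 (volume.restrict Ω)) :
    Filter.Tendsto (fun ρ : ℝ => ∫ z in Ω, ‖f z * Ψ ρ z - f z‖ ^ 2)
      (nhdsWithin 0 (Set.Ioi 0)) (nhds 0) := by
  obtain ⟨c, hc, hφlb⟩ := hlb
  obtain ⟨A, hA₀, hA⟩ := exists_tsum_norm_sub_latPt_le hper hSQ hana hb hdecay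
  have hae : ∀ᵐ z ∂volume.restrict Ω, z ∈ Ω \ SLat S :=
    (ae_restrict_mem hΩopen.measurableSet).and
      (ae_restrict_of_ae (measure_eq_zero_iff_ae_notMem.1 ((countable_SLat S).measure_zero _)))
  have hIoc : Ioc (0 : ℝ) 1 ∈ 𝓝[>] 0 := Ioc_mem_nhdsGT one_pos
  refine tendsto_integral_norm_mul_sub_sq hf (M := 1 + A / c) ?_ ?_ ?_
  · filter_upwards [hIoc] with ρ hρ
    exact (hΨana ρ hρ).continuousOn.aestronglyMeasurable hΩopen.measurableSet
  · filter_upwards [hIoc] with ρ hρ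
    filter_upwards [hae] with z hz
    rw [hΨeq ρ hρ z hz]
    exact norm_tsum_mul_div_tsum_le (hsum z hz)
      (fun p => norm_ofReal_two_rpow_neg_mul_le_one hρ.1.le (norm_nonneg _)) hA₀
      (hA z hz.1 (hsum z hz)) hc (hφlb z hz)
  · filter_upwards [hae] with z hz
    have hne : ∑' p : ℤ × ℤ, ϕ (z - latPt p) ≠ 0 := norm_pos_iff.1 (hc.trans_le (hφlb z hz))
    have h := (tendsto_tsum_two_rpow_neg_mul (fun p => norm_nonneg (latPt p)) (hsum z hz)).div_const
      (∑' p : ℤ × ℤ, ϕ (z - latPt p))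
    rw [div_self hne] at h
    exact h.congr' (eventually_of_mem hIoc fun ρ hρ => (hΨeq ρ hρ z hz).symm)

/-- `‖f·Ψ_ρ - f‖²_{L²(Ω)} → 0` as `ρ → 0⁺` for every `f ∈ L²(Ω)`. -/
theorem stmt4
    (Ω : Set ℂ) (hΩopen : IsOpen Ω) (hΩne : Ω.Nonempty)
    (hper : ∀ z ∈ Ω, ∀ p : ℤ × ℤ, z + latPt p ∈ Ω)
    (S : Finset ℂ) (hSQ : (S : Set ℂ) ⊆ QSet)
    (ϕ : ℂ → ℂ) (hmero : MeromorphicOn ϕ Set.univ)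
    (hana : AnalyticOnNhd ℂ ϕ ((S : Set ℂ)ᶜ))
    (b d : ℝ) (hb : 2 < b) (hd : 0 ≤ d)
    (hdecay : ∀ z ∈ Ω, z ∉ closure QSet →
      (1 + ‖z‖) ^ b * ‖ϕ z‖ ≤ d)
    (hsum : ∀ z ∈ Ω \ SLat S,
      Summable (fun p : ℤ × ℤ => ‖ϕ (z - latPt p)‖))
    (hnz : ∀ z ∈ closure Ω \ SLat S, (∑' p : ℤ × ℤ, ϕ (z - latPt p)) ≠ 0)
    (hlb : ∃ c > (0:ℝ), ∀ z ∈ Ω \ SLat S,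
      c ≤ ‖∑' p : ℤ × ℤ, ϕ (z - latPt p)‖)
    (Ψ : ℝ → ℂ → ℂ)
    (hΨana : ∀ ρ ∈ Set.Ioc (0:ℝ) 1, AnalyticOnNhd ℂ (Ψ ρ) Ω)
    (hΨeq : ∀ ρ ∈ Set.Ioc (0:ℝ) 1, ∀ z ∈ Ω \ SLat S,
      Ψ ρ z = (∑' p : ℤ × ℤ,
          (Complex.ofReal ((2:ℝ) ^ (-(ρ * ‖latPt p‖)))) * ϕ (z - latPt p)) /
        (∑' p : ℤ × ℤ, ϕ (z - latPt p)))
    (f : ℂ → ℂ) (hf : MemLp f 2 (volume.restrict Ω)) :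
    Filter.Tendsto (fun ρ : ℝ => ∫ z in Ω, ‖f z * Ψ ρ z - f z‖ ^ 2)
      (nhdsWithin 0 (Set.Ioi 0)) (nhds 0) :=
  stmt4_general Ω hΩopen hper S hSQ ϕ hana b d hb hdecay hsum hlb Ψ hΨana hΨeq f hf
end
end

section
/- For z ∈ ℂ ∖ Λ, the family (−2/(z − m)³)_{m∈Λ} is summable; denote its sum by W(z) = ∑_{m∈Λ} −2/(z − m)³. Then W is analytic on ℂ ∖ Λ, is doubly periodic with W(z + 1) = W(z) = W(z + i) for all z ∈ ℂ ∖ Λ, is odd with W(−z) = −W(z) for all z ∈ ℂ ∖ Λ, and vanishes at the half-lattice points: W(1/2) = W(i/2) = W((1 + i)/2) = 0. -/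
open Complex MeasureTheory Set Filter

noncomputable section

/-- The set of lattice points, as a subset of `ℂ`. -/
def latSet : Set ℂ := {z : ℂ | ∃ p : ℤ × ℤ, z = latPt p}

/-- The function `W = ℘′`, the derivative of the Weierstrass `℘`-function of the lattice. -/
def Wf (z : ℂ) : ℂ := ∑' p : ℤ × ℤ, -2 / (z - latPt p) ^ 3

/-! `W` is `℘'` for the period pair `(1, i)`, so summability, analyticity, periodicity and
oddness come from the theory of `PeriodPair`. At a half period `ω / 2` with `ω ∈ Λ`,
periodicity and oddness give `W (ω / 2) = W (-(ω / 2)) = -W (ω / 2)`, so `W (ω / 2) = 0`. -/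

open PeriodPair

lemma PeriodPair.derivWeierstrassP_coe_div_two (L : PeriodPair) (l : L.lattice) :
    ℘'[L] (l / 2) = 0 := by
  have h : ℘'[L] (l / 2) = -℘'[L] (l / 2) := by
    rw [← L.derivWeierstrassP_neg, ← L.derivWeierstrassP_add_coe (-(l / 2)) l, neg_add_eq_sub,
      sub_half]
  exact CharZero.eq_neg_self_iff.mp h

def gaussianPeriodPair : PeriodPair where
  ω₁ := 1
  ω₂ := I
  indep := by simpa using Complex.basisOneI.linearIndependent

lemma gaussianPeriodPair_latticeEquivProd_symm (p : ℤ × ℤ) :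
    (gaussianPeriodPair.latticeEquivProd.symm p : ℂ) = latPt p := by
  rw [latticeEquiv_symm_apply]
  simp [gaussianPeriodPair, latPt]

lemma latSet_eq_gaussianPeriodPair_lattice : latSet = gaussianPeriodPair.lattice := by
  ext z
  simp only [latSet, Set.mem_ofPred_eq, SetLike.mem_coe, mem_lattice, gaussianPeriodPair, latPt]
  constructor
  · rintro ⟨p, rfl⟩
    exact ⟨p.1, p.2, by ring⟩
  · rintro ⟨m, n, rfl⟩
    exact ⟨(m, n), by simp⟩

lemma hasSum_Wf (z : ℂ) :
    HasSum (fun p : ℤ × ℤ => -2 / (z - latPt p) ^ 3) (℘'[gaussianPeriodPair] z) := by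
  have h := gaussianPeriodPair.latticeEquivProd.symm.toEquiv.hasSum_iff.mpr
    (gaussianPeriodPair.hasSum_derivWeierstrassP z)
  simpa [Function.comp_def, gaussianPeriodPair_latticeEquivProd_symm] using h

lemma Wf_eq_derivWeierstrassP : Wf = ℘'[gaussianPeriodPair] :=
  funext fun z => (hasSum_Wf z).tsum_eq

/-- summability, analyticity, double periodicity, oddness and the
half-lattice zeros of `W = ℘′`. -/
theorem stmt9 :
    (∀ z ∉ latSet, Summable (fun p : ℤ × ℤ => -2 / (z - latPt p) ^ 3)) ∧
    AnalyticOnNhd ℂ Wf latSetᶜ ∧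
    (∀ z ∉ latSet, Wf (z + 1) = Wf z ∧ Wf (z + Complex.I) = Wf z ∧ Wf (-z) = -Wf z) ∧
    Wf (1 / 2) = 0 ∧ Wf (Complex.I / 2) = 0 ∧ Wf ((1 + Complex.I) / 2) = 0 := by
  set L := gaussianPeriodPair
  let ω₁ : L.lattice := ⟨1, L.ω₁_mem_lattice⟩
  let ω₂ : L.lattice := ⟨I, L.ω₂_mem_lattice⟩
  rw [Wf_eq_derivWeierstrassP, latSet_eq_gaussianPeriodPair_lattice]
  refine ⟨fun z _ => (hasSum_Wf z).summable, L.analyticOnNhd_derivWeierstrassP,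
    fun z _ => ⟨L.derivWeierstrassP_add_coe z ω₁, L.derivWeierstrassP_add_coe z ω₂,
      L.derivWeierstrassP_neg z⟩,
    L.derivWeierstrassP_coe_div_two ω₁, L.derivWeierstrassP_coe_div_two ω₂,
    L.derivWeierstrassP_coe_div_two (ω₁ + ω₂)⟩
end
end

section
/- Let H be a complex Hilbert space, let M and N be closed subspaces of H with orthogonal projections P onto M and Q onto N, and let J : H → H be a continuous linear bijection with continuous inverse such that J(M) = N. Let ε ∈ (0,1] and suppose ‖I − J‖ ≤ ε and ‖I − J⁻¹‖ ≤ ε (operator norms, I the identity on H). Then ‖P − Q‖ ≤ 8 √ε. -/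
/-!
`P - Q = P (1 - Q) - (1 - P) Q`, and `P (1 - Q)` is the adjoint of `(1 - Q) P`. Since `J` maps
`ran P` into `ran Q`, `(1 - Q) J P = 0`, so `(1 - Q) P = (1 - Q) (1 - J) P` has norm at most
`‖1 - J‖`; symmetrically `‖(1 - P) Q‖ ≤ ‖1 - J⁻¹‖`. Hence `‖P - Q‖ ≤ 2ε ≤ 8√ε`.
-/

namespace IsStarProjection

variable {A : Type*} [NormedRing A] [StarRing A] [CStarRing A] {p q : A}

lemma norm_one_sub_mul_le (hp : IsStarProjection p) (hq : IsStarProjection q) {j : A}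
    (hj : (1 - q) * j * p = 0) : ‖(1 - q) * p‖ ≤ ‖1 - j‖ :=
  calc ‖(1 - q) * p‖ = ‖(1 - q) * (1 - j) * p‖ := by
        rw [← sub_zero ((1 - q) * p), ← hj]; noncomm_ring
    _ ≤ ‖1 - q‖ * ‖1 - j‖ * ‖p‖ := norm_mul₃_le
    _ ≤ 1 * ‖1 - j‖ * 1 := by
        gcongr; exacts [IsStarProjection.norm_le _ hq.one_sub, IsStarProjection.norm_le _ hp]
    _ = ‖1 - j‖ := by ring

lemma norm_sub_le (hp : IsStarProjection p) (hq : IsStarProjection q) :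
    ‖p - q‖ ≤ ‖(1 - q) * p‖ + ‖(1 - p) * q‖ := by
  have hdecomp : p - q = star ((1 - q) * p) - (1 - p) * q := by
    rw [star_mul, star_sub, star_one, hp.isSelfAdjoint.star_eq, hq.isSelfAdjoint.star_eq]
    noncomm_ring
  rw [hdecomp, ← norm_star ((1 - q) * p)]
  exact _root_.norm_sub_le _ _

end IsStarProjection

namespace ContinuousLinearMap

variable {R M : Type*} [Ring R] [AddCommGroup M] [Module R M] [TopologicalSpace M]
  [IsTopologicalAddGroup M]

lemma one_sub_mul_mul_eq_zero {p q j : M →L[R] M} (hq : IsIdempotentElem q)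
    (hj : (LinearMap.range (p : M →ₗ[R] M)).map (j : M →ₗ[R] M) ≤
      LinearMap.range (q : M →ₗ[R] M)) :
    (1 - q) * j * p = 0 := by
  ext x
  obtain ⟨y, hy⟩ := hj ⟨p x, ⟨x, rfl⟩, rfl⟩
  change (1 - q) (j (p x)) = 0
  rw [← coe_coe j, ← hy]
  change q y - (q * q) y = 0
  rw [hq.eq, sub_self]

end ContinuousLinearMap

theorem stmt14_general
    {H : Type*} [NormedAddCommGroup H] [InnerProductSpace ℂ H] [CompleteSpace H]
    (M N : Submodule ℂ H)
    (P Q : H →L[ℂ] H)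
    (hPsa : ∀ x y : H, (inner ℂ (P x) y : ℂ) = inner ℂ x (P y))
    (hPidem : P.comp P = P) (hPran : LinearMap.range (P : H →ₗ[ℂ] H) = M)
    (hQsa : ∀ x y : H, (inner ℂ (Q x) y : ℂ) = inner ℂ x (Q y))
    (hQidem : Q.comp Q = Q) (hQran : LinearMap.range (Q : H →ₗ[ℂ] H) = N)
    (J : H ≃L[ℂ] H) (hJMN : M.map (J : H →ₗ[ℂ] H) = N)
    (ε : ℝ) (hε : ε ∈ Set.Ioc (0:ℝ) 1)
    (hJ : ‖ContinuousLinearMap.id ℂ H - (J : H →L[ℂ] H)‖ ≤ ε)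
    (hJi : ‖ContinuousLinearMap.id ℂ H - (J.symm : H →L[ℂ] H)‖ ≤ ε) :
    ‖P - Q‖ ≤ 8 * Real.sqrt ε := by
  have hP : IsStarProjection P :=
    ⟨hPidem, ContinuousLinearMap.isSelfAdjoint_iff_isSymmetric.mpr hPsa⟩
  have hQ : IsStarProjection Q :=
    ⟨hQidem, ContinuousLinearMap.isSelfAdjoint_iff_isSymmetric.mpr hQsa⟩
  have hJPQ : (1 - Q) * J * P = 0 :=
    ContinuousLinearMap.one_sub_mul_mul_eq_zero hQ.isIdempotentElem
      (by rw [hPran, hQran]; exact hJMN.le)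
  have hJQP : (1 - P) * J.symm * Q = 0 :=
    ContinuousLinearMap.one_sub_mul_mul_eq_zero hP.isIdempotentElem
      (by rw [hPran, hQran]; exact ((Submodule.map_symm_eq_iff J.toLinearEquiv).mpr hJMN).le)
  rw [← ContinuousLinearMap.one_def] at hJ hJi
  have hε_le_sqrt : ε ≤ Real.sqrt ε := Real.le_sqrt_of_sq_le (by nlinarith [hε.1, hε.2])
  calc ‖P - Q‖ ≤ ‖(1 - Q) * P‖ + ‖(1 - P) * Q‖ := hP.norm_sub_le hQ
    _ ≤ ‖1 - (J : H →L[ℂ] H)‖ + ‖1 - (J.symm : H →L[ℂ] H)‖ :=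
      add_le_add (hP.norm_one_sub_mul_le hQ hJPQ) (hQ.norm_one_sub_mul_le hP hJQP)
    _ ≤ 8 * Real.sqrt ε := by linarith [Real.sqrt_nonneg ε]

/-- if `J` is a continuous linear bijection with `J(M) = N` which is
`ε`-close to the identity together with its inverse, then the orthogonal projections
onto `M` and `N` satisfy `‖P − Q‖ ≤ 8√ε`. -/
theorem stmt14
    {H : Type*} [NormedAddCommGroup H] [InnerProductSpace ℂ H] [CompleteSpace H]
    (M N : Submodule ℂ H) (hM : IsClosed (M : Set H)) (hN : IsClosed (N : Set H))
    (P Q : H →L[ℂ] H)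
    (hPsa : ∀ x y : H, (inner ℂ (P x) y : ℂ) = inner ℂ x (P y))
    (hPidem : P.comp P = P) (hPran : LinearMap.range (P : H →ₗ[ℂ] H) = M)
    (hQsa : ∀ x y : H, (inner ℂ (Q x) y : ℂ) = inner ℂ x (Q y))
    (hQidem : Q.comp Q = Q) (hQran : LinearMap.range (Q : H →ₗ[ℂ] H) = N)
    (J : H ≃L[ℂ] H) (hJMN : M.map (J : H →ₗ[ℂ] H) = N)
    (ε : ℝ) (hε : ε ∈ Set.Ioc (0:ℝ) 1)
    (hJ : ‖ContinuousLinearMap.id ℂ H - (J : H →L[ℂ] H)‖ ≤ ε)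
    (hJi : ‖ContinuousLinearMap.id ℂ H - (J.symm : H →L[ℂ] H)‖ ≤ ε) :
    ‖P - Q‖ ≤ 8 * Real.sqrt ε :=
  stmt14_general M N P Q hPsa hPidem hPran hQsa hQidem hQran J hJMN ε hε hJ hJi
end

section
/- Let K be a compact topological space, let X be a complex Banach space, and let T : K → B(X) be continuous with respect to the operator norm on the space B(X) of bounded linear operators on X. Then the union ⋃_{k∈K} σ(T(k)) of the spectra of the operators T(k) is a closed subset of ℂ. -/
theorem isClosed_iUnion_of_compactSpace {K Y : Type*} [TopologicalSpace K] [CompactSpace K]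
    [TopologicalSpace Y] {s : K → Set Y} (hs : IsClosed {p : K × Y | p.2 ∈ s p.1}) :
    IsClosed (⋃ k, s k) := by
  convert isClosedMap_snd_of_compactSpace _ hs
  ext y
  simp

theorem isClosed_setOf_mem_spectrum {𝕜 A K : Type*} [NormedField 𝕜] [NormedRing A]
    [NormedAlgebra 𝕜 A] [CompleteSpace A] [TopologicalSpace K] {f : K → A} (hf : Continuous f) :
    IsClosed {p : K × 𝕜 | p.2 ∈ spectrum 𝕜 (f p.1)} :=
  nonunits.isClosed.preimage (f := fun p : K × 𝕜 ↦ algebraMap 𝕜 A p.2 - f p.1) (by fun_prop)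

/-- for a norm-continuous family of bounded operators indexed by a compact
space, the union of the spectra is closed. -/
theorem stmt16
    {K : Type*} [TopologicalSpace K] [CompactSpace K]
    {X : Type*} [NormedAddCommGroup X] [NormedSpace ℂ X] [CompleteSpace X]
    (T : K → X →L[ℂ] X) (hT : Continuous T) :
    IsClosed (⋃ k : K, spectrum ℂ (T k)) :=
  isClosed_iUnion_of_compactSpace (isClosed_setOf_mem_spectrum hT)
end
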